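/- If z is a nonzero vector in ℤ²ᵍ that is primitive (the gcd of its coordinates is 1) and the standard symplectic form on ℤ²ᵍ is given, then z can be extended to a symplectic basis of ℤ²ᵍ. -/

import Mathlib

/-!
Write z = (a, b) with a, b ∈ ℤᵍ. In the i-th coordinate plane an SL₂(ℤ) matrix carries
(gcd(aᵢ, bᵢ), 0) to (aᵢ, bᵢ); these assemble to a symplectic matrix carrying (d, 0) to z, and d is
again primitive, so y ⬝ d = 1 for some y. For symmetric S the shears (x, w) ↦ (x, w + S x) and
(x, w) ↦ (x + S w, w) are symplectic, and S can send any vector having a Bézout partner to any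
prescribed vector; three such shears carry (eᵢ, 0) through (eᵢ, y) and (d, y) to (d, 0).
-/

open Matrix

namespace Matrix

variable {ι R : Type*} [Fintype ι] [CommRing R]

theorem fromBlocks_mulVec_sumElim {κ : Type*} [Fintype κ] (A : Matrix ι ι R) (B : Matrix ι κ R)
    (C : Matrix κ ι R) (D : Matrix κ κ R) (u : ι → R) (v : κ → R) :
    fromBlocks A B C D *ᵥ Sum.elim u v = Sum.elim (A *ᵥ u + B *ᵥ v) (C *ᵥ u + D *ᵥ v) := by
  rw [fromBlocks_mulVec, Sum.elim_comp_inl, Sum.elim_comp_inr]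

theorem exists_isSymm_mulVec_eq {a w : ι → R} (h : w ⬝ᵥ a = 1) (v : ι → R) :
    ∃ S : Matrix ι ι R, S.IsSymm ∧ S *ᵥ a = v := by
  refine ⟨vecMulVec v w + vecMulVec w v - (v ⬝ᵥ a) • vecMulVec w w, ?_, ?_⟩
  · simp [IsSymm, add_comm]
  · simp [sub_mulVec, add_mulVec, smul_mulVec, vecMulVec_mulVec, h, dotProduct_comm v a]

theorem dvd_mulVec_apply {κ : Type*} {c : R} {x : ι → R} (hx : ∀ i, c ∣ x i) (A : Matrix κ ι R)
    (j : κ) : c ∣ (A *ᵥ x) j :=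
  Finset.dvd_sum fun i _ => (hx i).mul_left _

end Matrix

theorem Finset.exists_dotProduct_eq_one_of_isUnit_gcd {ι R : Type*} [Fintype ι] [CommRing R]
    [IsBezout R] [NormalizedGCDMonoid R] {d : ι → R} (h : IsUnit (Finset.univ.gcd d)) :
    ∃ y : ι → R, y ⬝ᵥ d = 1 := by
  obtain ⟨c, hc⟩ := Finset.gcd_eq_sum_mul Finset.univ d
  obtain ⟨u, hu⟩ := isUnit_iff_dvd_one.mp h
  refine ⟨u • c, ?_⟩
  rw [smul_dotProduct, dotProduct_comm, dotProduct, ← hc, smul_eq_mul, mul_comm, hu]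

theorem Int.exists_det_eq_one_and_mul_eq (p q : ℤ) :
    ∃ α β γ δ d : ℤ, α * δ - β * γ = 1 ∧ α * d = p ∧ γ * d = q := by
  rcases eq_or_ne (Int.gcd p q) 0 with h | h
  · obtain ⟨rfl, rfl⟩ := Int.gcd_eq_zero_iff.mp h
    exact ⟨1, 0, 0, 1, 0, by norm_num⟩
  · obtain ⟨d, p', q', -, hpq, rfl, rfl⟩ := Int.exists_gcd_one' (Nat.pos_of_ne_zero h)
    obtain ⟨u, v, huv⟩ := Int.isCoprime_iff_gcd_eq_one.mpr hpq
    exact ⟨p', -v, q', u, d, by linear_combination huv, rfl, rfl⟩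

namespace SymplecticGroup

variable {ι R : Type*} [Fintype ι] [DecidableEq ι] [CommRing R]

theorem fromBlocks_one_zero_symm_one_mem {S : Matrix ι ι R} (hS : S.IsSymm) :
    fromBlocks 1 0 S 1 ∈ symplecticGroup ι R := by
  simp [fromBlocks_mem_iff, hS.eq]

theorem fromBlocks_one_symm_zero_one_mem {S : Matrix ι ι R} (hS : S.IsSymm) :
    fromBlocks 1 S 0 1 ∈ symplecticGroup ι R := by
  simp [fromBlocks_mem_iff, hS.eq]

theorem exists_mem_mulVec_single_eq {d y : ι → R} (h : y ⬝ᵥ d = 1) (i : ι) :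
    ∃ N ∈ symplecticGroup ι R, N *ᵥ Pi.single (Sum.inl i) 1 = Sum.elim d 0 := by
  have hsingle : (Pi.single i 1 : ι → R) ⬝ᵥ Pi.single i 1 = 1 := by simp
  obtain ⟨S₁, hS₁, hS₁e⟩ := exists_isSymm_mulVec_eq hsingle y
  obtain ⟨S₂, hS₂, hS₂y⟩ := exists_isSymm_mulVec_eq (dotProduct_comm y d ▸ h) (d - Pi.single i 1)
  obtain ⟨S₃, hS₃, hS₃d⟩ := exists_isSymm_mulVec_eq h (-y)
  refine ⟨fromBlocks 1 0 S₃ 1 * fromBlocks 1 S₂ 0 1 * fromBlocks 1 0 S₁ 1,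
    mul_mem (mul_mem (fromBlocks_one_zero_symm_one_mem hS₃)
      (fromBlocks_one_symm_zero_one_mem hS₂)) (fromBlocks_one_zero_symm_one_mem hS₁), ?_⟩
  have hstart : (Pi.single (Sum.inl i) 1 : ι ⊕ ι → R) = Sum.elim (Pi.single i 1) 0 := by
    ext (j | j) <;> simp [Pi.single_apply]
  have hey : (fromBlocks 1 0 S₁ 1 : Matrix (ι ⊕ ι) (ι ⊕ ι) R) *ᵥ Sum.elim (Pi.single i 1) 0 =
      Sum.elim (Pi.single i 1) y := by
    simp only [fromBlocks_mulVec_sumElim, one_mulVec, mulVec_zero, hS₁e, add_zero]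
  have hdy : fromBlocks 1 S₂ 0 1 *ᵥ Sum.elim (Pi.single i 1) y = Sum.elim d y := by
    simp only [fromBlocks_mulVec_sumElim, one_mulVec, zero_mulVec, hS₂y, zero_add, add_sub_cancel]
  have hd0 : (fromBlocks 1 0 S₃ 1 : Matrix (ι ⊕ ι) (ι ⊕ ι) R) *ᵥ Sum.elim d y =
      Sum.elim d 0 := by
    simp only [fromBlocks_mulVec_sumElim, one_mulVec, zero_mulVec, hS₃d, add_zero, neg_add_cancel]
  rw [hstart, ← mulVec_mulVec, ← mulVec_mulVec, hey, hdy, hd0]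

theorem fromBlocks_diagonal_mem {α β γ δ : ι → R} (h : ∀ i, α i * δ i - β i * γ i = 1) :
    fromBlocks (diagonal α) (diagonal β) (diagonal γ) (diagonal δ) ∈ symplecticGroup ι R := by
  simp only [fromBlocks_mem_iff, diagonal_transpose, diagonal_mul_diagonal, diagonal_sub]
  refine ⟨by simp only [mul_comm], by simp only [mul_comm], ?_⟩
  rw [← diagonal_one]
  exact congrArg diagonal (funext fun i => by rw [← h i]; ring)

theorem exists_mem_mulVec_sumElim_zero_eq (z : ι ⊕ ι → ℤ) :
    ∃ D ∈ symplecticGroup ι ℤ, ∃ d : ι → ℤ, D *ᵥ Sum.elim d 0 = z := by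
  choose α β γ δ d hdet hα hγ using
    fun i => Int.exists_det_eq_one_and_mul_eq (z (Sum.inl i)) (z (Sum.inr i))
  refine ⟨_, fromBlocks_diagonal_mem hdet, d, ?_⟩
  ext (i | i) <;> simp [fromBlocks_mulVec_sumElim, mulVec_diagonal, hα, hγ]

end SymplecticGroup

open Matrix in
theorem primitive_extends_to_symplectic_basis_general (g : ℕ)
    (J : Matrix (Fin g ⊕ Fin g) (Fin g ⊕ Fin g) ℤ)
    (hJ : J = Matrix.fromBlocks 0 1 (-1) 0)
    (z : Fin g ⊕ Fin g → ℤ)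
    (hprim : Finset.univ.gcd z = 1) :
    ∃ M : Matrix (Fin g ⊕ Fin g) (Fin g ⊕ Fin g) ℤ,
      IsUnit M.det ∧ Mᵀ * J * M = J ∧ ∃ i, (fun j => M j i) = z := by
  obtain ⟨D, hD, d, rfl⟩ := SymplecticGroup.exists_mem_mulVec_sumElim_zero_eq z
  have hd : IsUnit (Finset.univ.gcd d) := by
    refine isUnit_of_dvd_one (hprim ▸ Finset.dvd_gcd fun j _ => dvd_mulVec_apply ?_ D j)
    rintro (i | i)
    · exact Finset.gcd_dvd (Finset.mem_univ i)
    · exact dvd_zero _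
  obtain ⟨y, hy⟩ := Finset.exists_dotProduct_eq_one_of_isUnit_gcd hd
  obtain ⟨i⟩ : Nonempty (Fin g) := by
    by_contra h
    simp [not_nonempty_iff.mp h] at hy
  obtain ⟨N, hN, hNe⟩ := SymplecticGroup.exists_mem_mulVec_single_eq hy i
  have hDN := mul_mem hD hN
  refine ⟨D * N, SymplecticGroup.symplectic_det hDN, ?_, Sum.inl i, ?_⟩
  · have hJ' : J = -Matrix.J (Fin g) ℤ := by simp [hJ, Matrix.J, fromBlocks_neg]
    rw [hJ', Matrix.mul_neg, Matrix.neg_mul, SymplecticGroup.mem_iff'.mp hDN]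
  · rw [← hNe, mulVec_mulVec, mulVec_single_one]
    rfl

open Matrix in
theorem primitive_extends_to_symplectic_basis (g : ℕ)
    (J : Matrix (Fin g ⊕ Fin g) (Fin g ⊕ Fin g) ℤ)
    (hJ : J = Matrix.fromBlocks 0 1 (-1) 0)
    (z : Fin g ⊕ Fin g → ℤ) (hz : z ≠ 0)
    (hprim : Finset.univ.gcd z = 1) :
    ∃ M : Matrix (Fin g ⊕ Fin g) (Fin g ⊕ Fin g) ℤ,
      IsUnit M.det ∧ Mᵀ * J * M = J ∧ ∃ i, (fun j => M j i) = z :=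
  primitive_extends_to_symplectic_basis_general g J hJ z hprim
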